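/- arXiv:1107.0999 — 2 statements merged into one kernel-verified Lean document; each statement's English description precedes it below -/
import Mathlib

section
/- The element z_{r,s} := Σ_{1 ≤ a < b ≤ r+s} (a b)‾, where (a b)‾ = flip_{r,s}((a b)) if a,b are on the same side of the wall and (a b)‾ = −flip_{r,s}((a b)) if they are on opposite sides, is central in the walled Brauer algebra B_{r,s}(δ). -/
/-!
Write `e_{ab}` for `flip_{r,s}((a b))` and let `d` be a walled Brauer diagram; `z d` and `d z` are
sums over ordered pairs `a ≠ b`. Put under `d`, a same-side `e_{ab}` relabels the bottom vertices
`a, b` of `d`, and a cross-wall `e_{ab}` reconnects the strands of `d` at `a, b`, closing a circle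
exactly when `a — b` is an arc of `d`.
If the bottom vertices `a, b` propagate to the top vertices `a', b'`, relabelling (reconnecting) at
`a, b` is the same as at `a', b'`, so the term `(a, b)` of `z d` is the term `(a', b')` of `d z`.
The other terms of `z d` cancel in pairs `(a, b)`, `(a, c)` with `b — c` a bottom arc: relabelling
at `a, b` is reconnecting at `a, c`, and the signs differ because arcs cross the wall. Left over
are the terms in which `a — b` is itself an arc, each equal to `-δ d`.
The top-bottom reflection is an anti-automorphism fixing every `e_{ab}`; it turns this description
of `z d` into that of `d z`, and `d` has as many top as bottom vertices on arcs.
-/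

open scoped Classical

/-- Vertices of a diagram on `n` strands: `(true, i)` is the `i`-th vertex on
the top edge, `(false, i)` the `i`-th vertex on the bottom edge. -/
abbrev WBVertex (n : ℕ) := Bool × Fin n

/-- `d` is a walled Brauer diagram with the wall separating the first `r`
positions from the last `s`. -/
def IsWalledBrauerDiagram (r s : ℕ) (d : WBVertex (r + s) → WBVertex (r + s)) : Prop :=
  (∀ v, d (d v) = v) ∧ (∀ v, d v ≠ v) ∧
  ∀ (b : Bool) (i : Fin (r + s)),
    ((d (b, i)).1 ≠ b → (((d (b, i)).2 : ℕ) < r ↔ (i : ℕ) < r)) ∧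
    ((d (b, i)).1 = b → ¬(((d (b, i)).2 : ℕ) < r ↔ (i : ℕ) < r))

/-- The perfect matching underlying the permutation diagram of `σ`: the `a`-th
top vertex is joined to the `σ(a)`-th bottom vertex. -/
def permMatching (n : ℕ) (σ : Equiv.Perm (Fin n)) : WBVertex n → WBVertex n
  | (true, i) => (false, σ i)
  | (false, i) => (true, σ.symm i)

/-- Flipping (top ↔ bottom) the vertices lying strictly to the right of the
wall, i.e. at positions `≥ r` (`0`-indexed). -/
def wallFlip (r n : ℕ) (v : WBVertex n) : WBVertex n :=
  if (v.2 : ℕ) < r then v else (!v.1, v.2)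

/-- The map `flip_{r,s}` sending a permutation diagram to the walled Brauer
diagram obtained by flipping the part of the diagram right of the wall. -/
def flipMap (r s : ℕ) (σ : Equiv.Perm (Fin (r + s))) :
    WBVertex (r + s) → WBVertex (r + s) :=
  wallFlip r (r + s) ∘ permMatching (r + s) σ ∘ wallFlip r (r + s)

/-- The doubled vertex set used when concatenating a diagram `f` (placed at the
bottom, left summand) under a diagram `g` (placed on top, right summand). -/
abbrev WBDouble (n : ℕ) := WBVertex n ⊕ WBVertex n

/-- Apply `f` on the bottom diagram's vertices and `g` on the top diagram's. -/
def stackMap (n : ℕ) (f g : WBVertex n → WBVertex n) : WBDouble n → WBDouble n :=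
  Sum.map f g

/-- Identify the top edge of the bottom diagram with the bottom edge of the top
diagram. -/
def glueMap (n : ℕ) : WBDouble n → WBDouble n
  | Sum.inl (true, i) => Sum.inr (false, i)
  | Sum.inr (false, i) => Sum.inl (true, i)
  | v => v

/-- Outer vertices of the concatenation: the bottom edge of the bottom diagram
and the top edge of the top diagram. -/
def IsOuter (n : ℕ) : WBDouble n → Prop
  | Sum.inl (false, _) => True
  | Sum.inr (true, _) => True
  | _ => False

def forgetLevel (n : ℕ) : WBDouble n → WBVertex n
  | Sum.inl v => v
  | Sum.inr v => v

/-- The concatenation "`f` under `g`" of two diagrams: from an outer vertex,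
follow the strand through the middle until the first outer vertex is reached. -/
noncomputable def compDiagram (n : ℕ) (f g : WBVertex n → WBVertex n) :
    WBVertex n → WBVertex n := fun v =>
  let start : WBDouble n := if v.1 = true then Sum.inr v else Sum.inl v
  let seq : ℕ → WBDouble n := fun k =>
    (fun w => stackMap n f g (glueMap n w))^[k] (stackMap n f g start)
  forgetLevel n (seq (if h : ∃ k, IsOuter n (seq k) then Nat.find h else 0))

/-- The graph on the middle vertices of the concatenation "`f` under `g`" whose
edges are the top horizontal strands of `f` and the bottom horizontal strands
of `g`. -/
def middleGraph (n : ℕ) (f g : WBVertex n → WBVertex n) : SimpleGraph (Fin n) where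
  Adj i j := i ≠ j ∧ (f (true, i) = (true, j) ∨ f (true, j) = (true, i) ∨
    g (false, i) = (false, j) ∨ g (false, j) = (false, i))
  symm := by
    constructor
    intro i j h
    exact ⟨Ne.symm h.1, by tauto⟩
  loopless := by
    constructor
    intro i h
    exact h.1 rfl

/-- The middle point `i` lies on strands staying in the middle on both sides. -/
def closedAt (n : ℕ) (f g : WBVertex n → WBVertex n) (i : Fin n) : Prop :=
  (f (true, i)).1 = true ∧ (g (false, i)).1 = false

/-- The number of internal circles removed when concatenating `f` under `g`:
the number of connected components of the middle graph all of whose vertices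
are closed. -/
noncomputable def circlesCount (n : ℕ) (f g : WBVertex n → WBVertex n) : ℕ :=
  Nat.card {c : (middleGraph n f g).ConnectedComponent //
    ∀ i : Fin n, (middleGraph n f g).connectedComponentMk i = c → closedAt n f g i}

/-- The multiplication of the walled Brauer algebra `B_{r,s}(δ)` (extended to
the free `ℂ`-module on all maps): on basis diagrams, `σ · τ` is obtained by
putting `σ` under `τ`, removing internal circles, and multiplying by `δ^t`
where `t` is the number of circles removed. -/
noncomputable def wbMul (n : ℕ) (δ : ℂ) (x y : (WBVertex n → WBVertex n) →₀ ℂ) :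
    (WBVertex n → WBVertex n) →₀ ℂ :=
  x.sum fun f a => y.sum fun g b =>
    (a * b * δ ^ circlesCount n f g) • Finsupp.single (compDiagram n f g) (1 : ℂ)

/-- The element `z_{r,s} = Σ_{a<b} (a b)‾` of the walled Brauer algebra, where
`(a b)‾ = flip_{r,s}((a b))` if `a, b` are on the same side of the wall and
`(a b)‾ = −flip_{r,s}((a b))` if they are on opposite sides. -/
noncomputable def zElt (r s : ℕ) : (WBVertex (r + s) → WBVertex (r + s)) →₀ ℂ :=
  ∑ p : Fin (r + s) × Fin (r + s),
    if p.1 < p.2 then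
      (if ((p.1 : ℕ) < r ↔ (p.2 : ℕ) < r) then (1 : ℂ) else -1) •
        Finsupp.single (flipMap r s (Equiv.swap p.1 p.2)) (1 : ℂ)
    else 0

lemma Finset.sum_offDiag_eq_two_nsmul {α M : Type*} [LinearOrder α] [Fintype α] [AddCommMonoid M]
    (W : α × α → M) (hW : ∀ a b, W (b, a) = W (a, b)) :
    ∑ p ∈ univ.offDiag, W p = 2 • ∑ p ∈ univ with p.1 < p.2, W p := by
  rw [← sum_filter_add_sum_filter_not univ.offDiag (fun p => p.1 < p.2), two_nsmul]
  congr 1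
  · congr 1
    ext p
    simpa using ne_of_lt
  · refine sum_nbij' Prod.swap Prod.swap ?_ ?_ (fun _ _ => rfl) (fun _ _ => rfl)
      fun p _ => (hW p.1 p.2).symm
    · rintro ⟨a, b⟩ h
      simp only [mem_filter, mem_offDiag, mem_univ, true_and, not_lt] at h ⊢
      exact lt_of_le_of_ne h.2 h.1.symm
    · rintro ⟨a, b⟩ h
      simp only [mem_filter, mem_offDiag, mem_univ, true_and, not_lt] at h ⊢
      exact ⟨h.ne', h.le⟩

section Surgery

variable {V : Type*} [DecidableEq V]

/-- The matching `d` with `x, y` joined to each other and their former partners joined to each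
other. -/
def reconnect (x y : V) (d : V → V) : V → V := fun v =>
  if v = x then y else if v = y then x else if d v = x then d y else if d v = y then d x else d v

variable {d : V → V}

lemma reconnect_eq_self (hinv : Function.Involutive d) {x y : V} (h : d x = y) :
    reconnect x y d = d := by
  funext v
  simp only [reconnect]
  split_ifs <;> simp_all [hinv.eq_iff, hinv _]

variable (hinv : Function.Involutive d) (hfix : ∀ v, d v ≠ v)
include hinv hfix

lemma reconnect_apply_apply (x y : V) : reconnect (d x) (d y) d = reconnect x y d := by
  funext v
  simp only [reconnect]
  split_ifs <;> simp_all [hinv.eq_iff, hinv _]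

lemma swap_conj_eq_reconnect {x y : V} (hyx : d y ≠ x) :
    ⇑(Equiv.swap x y) ∘ d ∘ ⇑(Equiv.swap x y) = reconnect x (d y) d := by
  funext v
  simp only [reconnect, Function.comp_apply, Equiv.swap_apply_def]
  split_ifs <;> simp_all [hinv.eq_iff, hinv _]

lemma swap_conj_apply_apply (x y : V) :
    ⇑(Equiv.swap x y) ∘ d ∘ ⇑(Equiv.swap x y) =
      ⇑(Equiv.swap (d x) (d y)) ∘ d ∘ ⇑(Equiv.swap (d x) (d y)) := by
  funext v
  simp only [Function.comp_apply, Equiv.swap_apply_def]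
  split_ifs <;> simp_all [hinv.eq_iff, hinv _]

end Surgery

abbrev Diagram (n : ℕ) := WBVertex n → WBVertex n

lemma Function.Involutive.apply_mk_snd {n : ℕ} {d : Diagram n} (hinv : Function.Involutive d)
    {v : WBVertex n} {x : Bool} (h : (d v).1 = x) : d (x, (d v).2) = v := by
  rw [← h]
  exact hinv v

@[simp] lemma swap_mk_mk_mk {n : ℕ} (x : Bool) (a b i : Fin n) :
    Equiv.swap ((x, a) : WBVertex n) (x, b) (x, i) = (x, Equiv.swap a b i) :=
  (Prod.mk_right_injective x).swap_apply a b i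

@[simp] lemma swap_mk_mk_of_ne {n : ℕ} {x y : Bool} (hxy : y ≠ x) (a b i : Fin n) :
    Equiv.swap ((x, a) : WBVertex n) (x, b) (y, i) = (y, i) :=
  Equiv.swap_apply_of_ne_of_ne (by simp [hxy]) (by simp [hxy])

section Multiplication

variable {n : ℕ} (δ : ℂ)

noncomputable def diagramProduct (f g : Diagram n) : Diagram n →₀ ℂ :=
  δ ^ circlesCount n f g • Finsupp.single (compDiagram n f g) 1

noncomputable def wbMulBilin : (Diagram n →₀ ℂ) →ₗ[ℂ] (Diagram n →₀ ℂ) →ₗ[ℂ] Diagram n →₀ ℂ :=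
  Finsupp.lsum ℂ fun f => LinearMap.id.smulRight
    (Finsupp.lsum ℂ fun g => LinearMap.id.smulRight (diagramProduct δ f g))

lemma wbMul_eq_wbMulBilin (x y : Diagram n →₀ ℂ) : wbMul n δ x y = wbMulBilin δ x y := by
  simp only [wbMul, wbMulBilin, diagramProduct, Finsupp.lsum_apply, Finsupp.sum,
    LinearMap.sum_apply, LinearMap.smulRight_apply, LinearMap.id_apply, LinearMap.smul_apply,
    Finset.smul_sum, smul_smul]
  refine Finset.sum_congr rfl fun f _ => Finset.sum_congr rfl fun g _ => ?_
  ring_nf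

lemma wbMulBilin_single_single (f g : Diagram n) (a b : ℂ) :
    wbMulBilin δ (Finsupp.single f a) (Finsupp.single g b) = (a * b) • diagramProduct δ f g := by
  simp [wbMulBilin, smul_smul]

end Multiplication

section Strands

variable {n : ℕ} (f g : Diagram n)

/-- Following the strand of the concatenation of `f` under `g` from the vertex `w`, just reached,
one leaves through the outer vertex `u`. -/
inductive ExitsAt : WBDouble n → WBVertex n → Prop
  | bottom (i : Fin n) : ExitsAt (.inl (false, i)) (false, i)
  | top (i : Fin n) : ExitsAt (.inr (true, i)) (true, i)
  | up {i : Fin n} {u : WBVertex n} : ExitsAt (.inr (g (false, i))) u → ExitsAt (.inl (true, i)) u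
  | down {i : Fin n} {u : WBVertex n} :
      ExitsAt (.inl (f (true, i))) u → ExitsAt (.inr (false, i)) u

variable {f g}

lemma ExitsAt.exists_iterate {w : WBDouble n} {u : WBVertex n} (h : ExitsAt f g w u) :
    ∃ k, IsOuter n ((fun w => stackMap n f g (glueMap n w))^[k] w) ∧
      (∀ j < k, ¬ IsOuter n ((fun w => stackMap n f g (glueMap n w))^[j] w)) ∧
      forgetLevel n ((fun w => stackMap n f g (glueMap n w))^[k] w) = u := by
  induction h with
  | bottom i | top i => exact ⟨0, trivial, by simp, rfl⟩
  | up _ ih | down _ ih =>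
    obtain ⟨k, hk, hlt, hu⟩ := ih
    refine ⟨k + 1, hk, fun j hj => ?_, hu⟩
    cases j with
    | zero => exact id
    | succ j => exact hlt j (by omega)

lemma compDiagram_eq_of_exitsAt {v u : WBVertex n}
    (h : ExitsAt f g (stackMap n f g (if v.1 = true then .inr v else .inl v)) u) :
    compDiagram n f g v = u := by
  obtain ⟨k, hk, hlt, hu⟩ := h.exists_iterate
  have hex : ∃ k, IsOuter n ((fun w => stackMap n f g (glueMap n w))^[k]
      (stackMap n f g (if v.1 = true then .inr v else .inl v))) := ⟨k, hk⟩
  simp only [compDiagram]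
  rw [dif_pos hex, (Nat.find_eq_iff hex).2 ⟨hk, hlt⟩, hu]

lemma compDiagram_bottom {i : Fin n} {u : WBVertex n} (h : ExitsAt f g (.inl (f (false, i))) u) :
    compDiagram n f g (false, i) = u :=
  compDiagram_eq_of_exitsAt h

lemma compDiagram_top {i : Fin n} {u : WBVertex n} (h : ExitsAt f g (.inr (g (true, i))) u) :
    compDiagram n f g (true, i) = u :=
  compDiagram_eq_of_exitsAt h

@[simp] lemma exitsAt_inl_false {i : Fin n} {u : WBVertex n} :
    ExitsAt f g (.inl (false, i)) u ↔ u = (false, i) :=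
  ⟨fun h => by cases h; rfl, by rintro rfl; exact .bottom i⟩

@[simp] lemma exitsAt_inr_true {i : Fin n} {u : WBVertex n} :
    ExitsAt f g (.inr (true, i)) u ↔ u = (true, i) :=
  ⟨fun h => by cases h; rfl, by rintro rfl; exact .top i⟩

@[simp] lemma exitsAt_inl_true {i : Fin n} {u : WBVertex n} :
    ExitsAt f g (.inl (true, i)) u ↔ ExitsAt f g (.inr (g (false, i))) u :=
  ⟨fun h => by cases h; assumption, .up⟩

@[simp] lemma exitsAt_inr_false {i : Fin n} {u : WBVertex n} :
    ExitsAt f g (.inr (false, i)) u ↔ ExitsAt f g (.inl (f (true, i))) u :=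
  ⟨fun h => by cases h; assumption, .down⟩

end Strands

section Reflection

variable {n : ℕ}

def reflectVertex (v : WBVertex n) : WBVertex n := (!v.1, v.2)

@[simp] lemma reflectVertex_mk (b : Bool) (i : Fin n) : reflectVertex (b, i) = (!b, i) := rfl

@[simp] lemma reflectVertex_fst (v : WBVertex n) : (reflectVertex v).1 = !v.1 := rfl

@[simp] lemma reflectVertex_reflectVertex (v : WBVertex n) :
    reflectVertex (reflectVertex v) = v := by
  simp [reflectVertex]

def reflectDiagram (d : Diagram n) : Diagram n := reflectVertex ∘ d ∘ reflectVertex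

@[simp] lemma reflectDiagram_apply (d : Diagram n) (v : WBVertex n) :
    reflectDiagram d v = reflectVertex (d (reflectVertex v)) := rfl

@[simp] lemma reflectDiagram_reflectDiagram (d : Diagram n) :
    reflectDiagram (reflectDiagram d) = d := by
  funext v
  simp

def reflectLevels : WBDouble n → WBDouble n
  | .inl v => .inr (reflectVertex v)
  | .inr v => .inl (reflectVertex v)

lemma semiconj_reflectLevels (f g : Diagram n) :
    Function.Semiconj reflectLevels (fun w => stackMap n f g (glueMap n w))
      (fun w => stackMap n (reflectDiagram g) (reflectDiagram f) (glueMap n w)) := by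
  rintro (⟨_ | _, i⟩ | ⟨_ | _, i⟩) <;> simp [reflectLevels, glueMap, stackMap]

lemma isOuter_reflectLevels (w : WBDouble n) : IsOuter n (reflectLevels w) ↔ IsOuter n w := by
  rcases w with ⟨_ | _, i⟩ | ⟨_ | _, i⟩ <;> exact Iff.rfl

lemma forgetLevel_reflectLevels (w : WBDouble n) :
    forgetLevel n (reflectLevels w) = reflectVertex (forgetLevel n w) := by
  rcases w with w | w <;> rfl

lemma compDiagram_reflectDiagram (f g : Diagram n) :
    compDiagram n (reflectDiagram g) (reflectDiagram f) = reflectDiagram (compDiagram n f g) := by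
  funext v
  have hwalk : ∀ k, (fun w => stackMap n (reflectDiagram g) (reflectDiagram f) (glueMap n w))^[k]
      (stackMap n (reflectDiagram g) (reflectDiagram f) (if v.1 = true then .inr v else .inl v)) =
      reflectLevels ((fun w => stackMap n f g (glueMap n w))^[k] (stackMap n f g
        (if (reflectVertex v).1 = true then .inr (reflectVertex v)
          else .inl (reflectVertex v)))) := by
    intro k
    rw [(semiconj_reflectLevels f g).iterate_right k]
    obtain ⟨_ | _, i⟩ := v <;> rfl
  simp only [compDiagram, reflectDiagram_apply, hwalk, isOuter_reflectLevels,
    forgetLevel_reflectLevels]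

lemma reflectVertex_eq_iff {v w : WBVertex n} : reflectVertex v = w ↔ v = reflectVertex w := by
  constructor <;> rintro rfl <;> simp

lemma middleGraph_reflectDiagram (f g : Diagram n) :
    middleGraph n (reflectDiagram g) (reflectDiagram f) = middleGraph n f g := by
  ext i j
  simp only [middleGraph, reflectDiagram_apply, reflectVertex_mk, reflectVertex_eq_iff,
    Bool.not_true, Bool.not_false]
  tauto

lemma closedAt_reflectDiagram (f g : Diagram n) :
    closedAt n (reflectDiagram g) (reflectDiagram f) = closedAt n f g := by
  ext i
  simp [closedAt, reflectVertex, and_comm]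

lemma circlesCount_reflectDiagram (f g : Diagram n) :
    circlesCount n (reflectDiagram g) (reflectDiagram f) = circlesCount n f g := by
  rw [circlesCount, circlesCount, middleGraph_reflectDiagram, closedAt_reflectDiagram]

lemma reflectVertex_injective : Function.Injective (reflectVertex (n := n)) :=
  fun v w h => by simpa using congrArg reflectVertex h

lemma reflectDiagram_swap_conj (x y : WBVertex n) (d : Diagram n) :
    reflectDiagram (⇑(Equiv.swap x y) ∘ d ∘ ⇑(Equiv.swap x y)) =
      ⇑(Equiv.swap (reflectVertex x) (reflectVertex y)) ∘ reflectDiagram d ∘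
        ⇑(Equiv.swap (reflectVertex x) (reflectVertex y)) := by
  funext v
  obtain ⟨w, rfl⟩ : ∃ w, v = reflectVertex w := ⟨reflectVertex v, by simp⟩
  simp [reflectVertex_injective.swap_apply]

lemma reflectDiagram_reconnect (x y : WBVertex n) (d : Diagram n) :
    reflectDiagram (reconnect x y d) =
      reconnect (reflectVertex x) (reflectVertex y) (reflectDiagram d) := by
  funext v
  simp only [reconnect, reflectDiagram_apply]
  split_ifs <;> simp_all [reflectVertex_eq_iff]

noncomputable def reflectLinear (n : ℕ) : (Diagram n →₀ ℂ) →ₗ[ℂ] Diagram n →₀ ℂ :=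
  Finsupp.lmapDomain ℂ ℂ reflectDiagram

@[simp] lemma reflectLinear_single (d : Diagram n) (c : ℂ) :
    reflectLinear n (Finsupp.single d c) = Finsupp.single (reflectDiagram d) c := by
  simp [reflectLinear]

lemma diagramProduct_reflectDiagram (δ : ℂ) (f g : Diagram n) :
    diagramProduct δ (reflectDiagram g) (reflectDiagram f) =
      reflectLinear n (diagramProduct δ f g) := by
  rw [diagramProduct, diagramProduct, map_smul, reflectLinear_single,
    compDiagram_reflectDiagram, circlesCount_reflectDiagram]

lemma reflectDiagram_flipMap (r s : ℕ) (σ : Equiv.Perm (Fin (r + s))) :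
    reflectDiagram (flipMap r s σ) = flipMap r s σ⁻¹ := by
  funext ⟨b, i⟩
  cases b <;> by_cases hi : (i : ℕ) < r <;>
    simp [flipMap, wallFlip, permMatching, hi, Equiv.Perm.inv_def, apply_ite reflectVertex]

lemma IsWalledBrauerDiagram.reflectDiagram {r s : ℕ} {d : Diagram (r + s)}
    (hd : IsWalledBrauerDiagram r s d) : IsWalledBrauerDiagram r s (reflectDiagram d) := by
  obtain ⟨hinv, hne, hwall⟩ := hd
  refine ⟨fun v => by simp [hinv], fun v => ?_, fun b i => ?_⟩
  · simpa [reflectVertex_eq_iff] using hne (reflectVertex v)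
  · simpa [reflectVertex, Bool.not_eq_not] using hwall (!b) i

end Reflection

section Transpositions

variable {r s : ℕ} {a b : Fin (r + s)}

lemma swap_lt_iff_of_sameSide (h : (a : ℕ) < r ↔ (b : ℕ) < r) (i : Fin (r + s)) :
    ((Equiv.swap a b i : ℕ) < r ↔ (i : ℕ) < r) := by
  rcases eq_or_ne i a with rfl | hia
  · rw [Equiv.swap_apply_left]; exact h.symm
  rcases eq_or_ne i b with rfl | hib
  · rw [Equiv.swap_apply_right]; exact h
  · rw [Equiv.swap_apply_of_ne_of_ne hia hib]

lemma flipMap_swap_of_sameSide (h : (a : ℕ) < r ↔ (b : ℕ) < r) (x : Bool) (i : Fin (r + s)) :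
    flipMap r s (Equiv.swap a b) (x, i) = (!x, Equiv.swap a b i) := by
  have := swap_lt_iff_of_sameSide h i
  cases x <;> by_cases hi : (i : ℕ) < r <;> simp [flipMap, wallFlip, permMatching, hi, this]

lemma flipMap_swap_of_ne {i : Fin (r + s)} (hia : i ≠ a) (hib : i ≠ b) (x : Bool) :
    flipMap r s (Equiv.swap a b) (x, i) = (!x, i) := by
  cases x <;> by_cases hi : (i : ℕ) < r <;>
    simp [flipMap, wallFlip, permMatching, hi, Equiv.swap_apply_of_ne_of_ne hia hib]

lemma flipMap_swap_left_of_crossSide (h : ¬((a : ℕ) < r ↔ (b : ℕ) < r)) (x : Bool) :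
    flipMap r s (Equiv.swap a b) (x, a) = (x, b) := by
  by_cases ha : (a : ℕ) < r
  · have hb : ¬ (b : ℕ) < r := fun hb => h (iff_of_true ha hb)
    cases x <;> simp [flipMap, wallFlip, permMatching, ha, hb]
  · have hb : (b : ℕ) < r := by by_contra hb; exact h (iff_of_false ha hb)
    cases x <;> simp [flipMap, wallFlip, permMatching, ha, hb]

lemma flipMap_swap_right_of_crossSide (h : ¬((a : ℕ) < r ↔ (b : ℕ) < r)) (x : Bool) :
    flipMap r s (Equiv.swap a b) (x, b) = (x, a) := by
  rw [Equiv.swap_comm]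
  exact flipMap_swap_left_of_crossSide (fun h' => h h'.symm) x

end Transpositions

section Composition

variable {r s : ℕ} {a b : Fin (r + s)}

lemma compDiagram_flipMap_swap_of_sameSide (h : (a : ℕ) < r ↔ (b : ℕ) < r) (d : Diagram (r + s)) :
    compDiagram (r + s) (flipMap r s (Equiv.swap a b)) d =
      ⇑(Equiv.swap (false, a) (false, b)) ∘ d ∘ ⇑(Equiv.swap (false, a) (false, b)) := by
  funext ⟨x, i⟩
  cases x
  · apply compDiagram_bottom
    rcases hd : d (false, Equiv.swap a b i) with ⟨_ | _, j⟩ <;>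
      simp [flipMap_swap_of_sameSide h, hd]
  · apply compDiagram_top
    rcases hd : d (true, i) with ⟨_ | _, j⟩ <;>
      simp [flipMap_swap_of_sameSide h, hd]

lemma exitsAt_inr_of_ne (d : Diagram (r + s)) {w : WBVertex (r + s)} (hwa : w ≠ (false, a))
    (hwb : w ≠ (false, b)) : ExitsAt (flipMap r s (Equiv.swap a b)) d (.inr w) w := by
  obtain ⟨_ | _, j⟩ := w
  · have hja : j ≠ a := by rintro rfl; exact hwa rfl
    have hjb : j ≠ b := by rintro rfl; exact hwb rfl
    simp [flipMap_swap_of_ne hja hjb]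
  · simp

lemma exitsAt_inr_of_crossSide (h : ¬((a : ℕ) < r ↔ (b : ℕ) < r)) {d : Diagram (r + s)}
    (hfix : ∀ v, d v ≠ v) (hba : d (false, b) ≠ (false, a)) :
    ExitsAt (flipMap r s (Equiv.swap a b)) d (.inr (false, a)) (d (false, b)) := by
  simp only [exitsAt_inr_false, flipMap_swap_left_of_crossSide h, exitsAt_inl_true]
  exact exitsAt_inr_of_ne d hba (hfix _)

lemma compDiagram_flipMap_swap_eq_of_exitsAt {d : Diagram (r + s)} {v u : WBVertex (r + s)}
    (hva : v ≠ (false, a)) (hvb : v ≠ (false, b))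
    (h : ExitsAt (flipMap r s (Equiv.swap a b)) d (.inr (d v)) u) :
    compDiagram (r + s) (flipMap r s (Equiv.swap a b)) d v = u := by
  obtain ⟨_ | _, i⟩ := v
  · have hia : i ≠ a := by rintro rfl; exact hva rfl
    have hib : i ≠ b := by rintro rfl; exact hvb rfl
    apply compDiagram_bottom
    rw [flipMap_swap_of_ne hia hib]
    exact .up h
  · exact compDiagram_top h

lemma compDiagram_flipMap_swap_of_crossSide (h : ¬((a : ℕ) < r ↔ (b : ℕ) < r))
    {d : Diagram (r + s)} (hinv : Function.Involutive d) (hfix : ∀ v, d v ≠ v) :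
    compDiagram (r + s) (flipMap r s (Equiv.swap a b)) d = reconnect (false, a) (false, b) d := by
  funext v
  simp only [reconnect]
  split_ifs with hva hvb hda hdb
  · subst hva
    apply compDiagram_bottom
    simp [flipMap_swap_left_of_crossSide h]
  · subst hvb
    apply compDiagram_bottom
    simp [flipMap_swap_right_of_crossSide h]
  · apply compDiagram_flipMap_swap_eq_of_exitsAt hva hvb
    rw [hda]
    exact exitsAt_inr_of_crossSide h hfix fun h' => hvb (hinv.injective (hda.trans h'.symm))
  · apply compDiagram_flipMap_swap_eq_of_exitsAt hva hvb
    rw [hdb, Equiv.swap_comm]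
    exact exitsAt_inr_of_crossSide (fun h' => h h'.symm) hfix
      fun h' => hva (hinv.injective (hdb.trans h'.symm))
  · exact compDiagram_flipMap_swap_eq_of_exitsAt hva hvb (exitsAt_inr_of_ne d hda hdb)

end Composition

section Circles

variable {n : ℕ} {f g : Diagram n}

lemma circlesCount_eq_zero
    (h : ∀ i, closedAt n f g i → ∃ j, (middleGraph n f g).Reachable i j ∧ ¬closedAt n f g j) :
    circlesCount n f g = 0 := by
  refine @Nat.card_of_isEmpty _ ⟨fun ⟨c, hc⟩ => ?_⟩
  obtain ⟨i, rfl⟩ := c.exists_rep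
  obtain ⟨j, hij, hj⟩ := h i (hc i rfl)
  exact hj (hc j (SimpleGraph.ConnectedComponent.sound hij).symm)

lemma circlesCount_eq_one (i₀ : Fin n) (h₀ : closedAt n f g i₀)
    (hadj : ∀ i j, closedAt n f g i → (middleGraph n f g).Adj i j → closedAt n f g j)
    (hreach : ∀ i, closedAt n f g i → (middleGraph n f g).Reachable i₀ i) :
    circlesCount n f g = 1 := by
  have hcomp : ∀ i, (middleGraph n f g).Reachable i₀ i → closedAt n f g i := by
    intro i hi
    rw [SimpleGraph.reachable_iff_reflTransGen] at hi
    induction hi with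
    | refl => exact h₀
    | tail _ hjk ih => exact hadj _ _ ih hjk
  have hmk : ∀ c : {c : (middleGraph n f g).ConnectedComponent //
      ∀ i, (middleGraph n f g).connectedComponentMk i = c → closedAt n f g i},
      c.1 = (middleGraph n f g).connectedComponentMk i₀ := by
    rintro ⟨c, hc⟩
    obtain ⟨i, rfl⟩ := c.exists_rep
    exact (SimpleGraph.ConnectedComponent.sound (hreach i (hc i rfl))).symm
  rw [circlesCount, Nat.card_eq_one_iff_unique]
  exact ⟨⟨fun c c' => Subtype.ext ((hmk c).trans (hmk c').symm)⟩,
    ⟨⟨_, fun i hi => hcomp i (SimpleGraph.ConnectedComponent.exact hi).symm⟩⟩⟩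

variable {r s : ℕ} {a b : Fin (r + s)}

lemma circlesCount_flipMap_swap_of_sameSide (h : (a : ℕ) < r ↔ (b : ℕ) < r) (d : Diagram (r + s)) :
    circlesCount (r + s) (flipMap r s (Equiv.swap a b)) d = 0 :=
  circlesCount_eq_zero fun i hi => absurd hi.1 (by simp [flipMap_swap_of_sameSide h])

lemma flipMap_swap_fst_eq_iff_of_crossSide (h : ¬((a : ℕ) < r ↔ (b : ℕ) < r)) (x : Bool)
    (j : Fin (r + s)) : (flipMap r s (Equiv.swap a b) (x, j)).1 = x ↔ j = a ∨ j = b := by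
  by_cases hja : j = a
  · simp [hja, flipMap_swap_left_of_crossSide h]
  by_cases hjb : j = b
  · simp [hjb, flipMap_swap_right_of_crossSide h]
  · simp [hja, hjb, flipMap_swap_of_ne hja hjb]

lemma closedAt_flipMap_swap_iff (h : ¬((a : ℕ) < r ↔ (b : ℕ) < r)) (d : Diagram (r + s))
    (i : Fin (r + s)) : closedAt (r + s) (flipMap r s (Equiv.swap a b)) d i ↔
      (i = a ∨ i = b) ∧ (d (false, i)).1 = false := by
  rw [closedAt, flipMap_swap_fst_eq_iff_of_crossSide h]

lemma circlesCount_flipMap_swap_of_arc (h : ¬((a : ℕ) < r ↔ (b : ℕ) < r)) {d : Diagram (r + s)}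
    (hinv : Function.Involutive d) (hab : d (false, a) = (false, b)) :
    circlesCount (r + s) (flipMap r s (Equiv.swap a b)) d = 1 := by
  have hba : d (false, b) = (false, a) := by rw [← hab, hinv]
  have hclosed : ∀ i, closedAt (r + s) (flipMap r s (Equiv.swap a b)) d i ↔ i = a ∨ i = b := by
    intro i
    rw [closedAt_flipMap_swap_iff h]
    refine ⟨And.left, fun hi => ⟨hi, ?_⟩⟩
    rcases hi with rfl | rfl <;> simp [hab, hba]
  refine circlesCount_eq_one a ((hclosed a).2 (Or.inl rfl)) (fun i j hi hij => ?_) fun i hi => ?_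
  · rw [hclosed] at hi ⊢
    obtain ⟨-, h1 | h2 | h3 | h4⟩ := hij
    · rcases hi with rfl | rfl
      · simp [flipMap_swap_left_of_crossSide h] at h1; exact Or.inr h1.symm
      · simp [flipMap_swap_right_of_crossSide h] at h1; exact Or.inl h1.symm
    · exact (flipMap_swap_fst_eq_iff_of_crossSide h true j).1 (by rw [h2])
    · rcases hi with rfl | rfl
      · simp [hab] at h3; exact Or.inr h3.symm
      · simp [hba] at h3; exact Or.inl h3.symm
    · have hj : (false, j) = d (false, i) := by rw [← h4, hinv]
      rcases hi with rfl | rfl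
      · simp [hab] at hj; exact Or.inr hj
      · simp [hba] at hj; exact Or.inl hj
  · rw [hclosed] at hi
    rcases hi with rfl | rfl
    · rfl
    · refine SimpleGraph.Adj.reachable ⟨fun h' => h (by rw [h']), Or.inl ?_⟩
      rw [flipMap_swap_left_of_crossSide h]

lemma circlesCount_flipMap_swap_of_not_arc (h : ¬((a : ℕ) < r ↔ (b : ℕ) < r))
    {d : Diagram (r + s)} (hinv : Function.Involutive d) (hfix : ∀ v, d v ≠ v)
    (hab : d (false, a) ≠ (false, b)) :
    circlesCount (r + s) (flipMap r s (Equiv.swap a b)) d = 0 := by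
  refine circlesCount_eq_zero fun i hi => ?_
  obtain ⟨hi, hbot⟩ := (closedAt_flipMap_swap_iff h d i).1 hi
  have hdi : d (false, i) = (false, (d (false, i)).2) := Prod.ext hbot rfl
  set j := (d (false, i)).2
  have hji : j ≠ i := fun hji => hfix (false, i) (by rw [hdi, hji])
  have hj : ¬(j = a ∨ j = b) := by
    rintro (hja | hjb) <;> rcases hi with rfl | rfl
    · exact hji hja
    · exact hab (by rw [← hja, ← hdi, hinv])
    · exact hab (by rw [hdi, hjb])
    · exact hji hjb
  exact ⟨j, SimpleGraph.Adj.reachable ⟨hji.symm, Or.inr (Or.inr (Or.inl hdi))⟩,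
    fun hcl => hj ((closedAt_flipMap_swap_iff h d j).1 hcl).1⟩

end Circles

section Terms

variable (r s : ℕ) (δ : ℂ)

/-- The summand of `zElt r s * d` indexed by `p`. -/
noncomputable def zMulTerm (d : Diagram (r + s)) (p : Fin (r + s) × Fin (r + s)) :
    Diagram (r + s) →₀ ℂ :=
  (if ((p.1 : ℕ) < r ↔ (p.2 : ℕ) < r) then (1 : ℂ) else -1) •
    diagramProduct δ (flipMap r s (Equiv.swap p.1 p.2)) d

variable {r s δ} {d : Diagram (r + s)} {a b : Fin (r + s)}

lemma zMulTerm_swap (d : Diagram (r + s)) (a b : Fin (r + s)) :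
    zMulTerm r s δ d (b, a) = zMulTerm r s δ d (a, b) := by
  simp only [zMulTerm, Equiv.swap_comm b a, iff_comm]

lemma zMulTerm_of_sameSide (h : (a : ℕ) < r ↔ (b : ℕ) < r) :
    zMulTerm r s δ d (a, b) =
      Finsupp.single
        (⇑(Equiv.swap (false, a) (false, b)) ∘ d ∘ ⇑(Equiv.swap (false, a) (false, b))) 1 := by
  simp [zMulTerm, h, diagramProduct, circlesCount_flipMap_swap_of_sameSide h,
    compDiagram_flipMap_swap_of_sameSide h]

lemma zMulTerm_of_crossSide (h : ¬((a : ℕ) < r ↔ (b : ℕ) < r)) (hinv : Function.Involutive d)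
    (hfix : ∀ v, d v ≠ v) (hab : d (false, a) ≠ (false, b)) :
    zMulTerm r s δ d (a, b) = -Finsupp.single (reconnect (false, a) (false, b) d) 1 := by
  simp [zMulTerm, h, diagramProduct, circlesCount_flipMap_swap_of_not_arc h hinv hfix hab,
    compDiagram_flipMap_swap_of_crossSide h hinv hfix]

lemma zMulTerm_of_arc (hd : IsWalledBrauerDiagram r s d) (hab : d (false, a) = (false, b)) :
    zMulTerm r s δ d (a, b) = (-δ) • Finsupp.single d 1 := by
  obtain ⟨hinv, hfix, hwall⟩ := hd
  have h : ¬((a : ℕ) < r ↔ (b : ℕ) < r) := by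
    simpa [hab, iff_comm] using (hwall false a).2
  simp [zMulTerm, h, diagramProduct, circlesCount_flipMap_swap_of_arc h hinv hab,
    compDiagram_flipMap_swap_of_crossSide h hinv hfix, reconnect_eq_self hinv hab]

lemma zMulTerm_add_zMulTerm_eq_zero (hd : IsWalledBrauerDiagram r s d) (hab : a ≠ b)
    (harc : d (false, a) ≠ (false, b)) {c : Fin (r + s)} (hbc : d (false, b) = (false, c)) :
    zMulTerm r s δ d (a, b) + zMulTerm r s δ d (a, c) = 0 := by
  obtain ⟨hinv, hfix, hwall⟩ := hd
  have hcb : d (false, c) = (false, b) := by rw [← hbc, hinv]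
  have hbc_side : ¬((b : ℕ) < r ↔ (c : ℕ) < r) := by
    simpa [hbc, iff_comm] using (hwall false b).2
  have hca : c ≠ a := by rintro rfl; exact harc hcb
  have hac : d (false, a) ≠ (false, c) := fun h => hab (by simpa [hinv _, hcb] using congrArg d h)
  by_cases h : (a : ℕ) < r ↔ (b : ℕ) < r
  · have h' : ¬((a : ℕ) < r ↔ (c : ℕ) < r) := fun h' => hbc_side (h.symm.trans h')
    rw [zMulTerm_of_sameSide h, zMulTerm_of_crossSide h' hinv hfix hac,
      swap_conj_eq_reconnect hinv hfix (by simp [hbc, hca]), hbc, add_neg_cancel]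
  · have h' : (a : ℕ) < r ↔ (c : ℕ) < r := by tauto
    rw [zMulTerm_of_crossSide h hinv hfix harc, zMulTerm_of_sameSide h',
      swap_conj_eq_reconnect hinv hfix (by simp [hcb, hab.symm]), hcb, neg_add_cancel]

lemma zMulTerm_eq_reflectLinear_of_propagating (hd : IsWalledBrauerDiagram r s d)
    {a' b' : Fin (r + s)} (ha : d (false, a) = (true, a')) (hb : d (false, b) = (true, b')) :
    zMulTerm r s δ d (a, b) =
      reflectLinear (r + s) (zMulTerm r s δ (reflectDiagram d) (a', b')) := by
  obtain ⟨hinv', hfix', -⟩ := hd.reflectDiagram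
  obtain ⟨hinv, hfix, hwall⟩ := hd
  have ha' : d (true, a') = (false, a) := by rw [← ha, hinv]
  have hb' : d (true, b') = (false, b) := by rw [← hb, hinv]
  have hsa : (a' : ℕ) < r ↔ (a : ℕ) < r := by simpa [ha] using (hwall false a).1
  have hsb : (b' : ℕ) < r ↔ (b : ℕ) < r := by simpa [hb] using (hwall false b).1
  by_cases h : (a : ℕ) < r ↔ (b : ℕ) < r
  · have h' : (a' : ℕ) < r ↔ (b' : ℕ) < r := hsa.trans (h.trans hsb.symm)
    rw [zMulTerm_of_sameSide h, zMulTerm_of_sameSide h', reflectLinear_single,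
      reflectDiagram_swap_conj, reflectDiagram_reflectDiagram, swap_conj_apply_apply hinv hfix,
      ha, hb]
    rfl
  · have h' : ¬((a' : ℕ) < r ↔ (b' : ℕ) < r) := fun h' => h (hsa.symm.trans (h'.trans hsb))
    rw [zMulTerm_of_crossSide h hinv hfix (by simp [ha]),
      zMulTerm_of_crossSide h' hinv' hfix' (by simp [ha']), map_neg, reflectLinear_single,
      reflectDiagram_reconnect, reflectDiagram_reflectDiagram, ← reconnect_apply_apply hinv hfix,
      ha, hb]
    rfl

end Terms

section Sums

open Finset

variable {r s : ℕ} {δ : ℂ} {d : Diagram (r + s)}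

lemma sum_zMulTerm_propagating (hd : IsWalledBrauerDiagram r s d) :
    ∑ p ∈ univ.offDiag with (d (false, p.1)).1 = true ∧ (d (false, p.2)).1 = true,
        zMulTerm r s δ d p =
      reflectLinear (r + s) (∑ q ∈ univ.offDiag with
        (reflectDiagram d (false, q.1)).1 = true ∧ (reflectDiagram d (false, q.2)).1 = true,
          zMulTerm r s δ (reflectDiagram d) q) := by
  have hinv : Function.Involutive d := hd.1
  rw [map_sum]
  refine sum_nbij' (fun p => ((d (false, p.1)).2, (d (false, p.2)).2))
    (fun q => ((d (true, q.1)).2, (d (true, q.2)).2)) ?_ ?_ ?_ ?_ ?_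
  · rintro ⟨a, b⟩ hp
    simp only [mem_filter, mem_offDiag, mem_univ, true_and, reflectDiagram_apply,
      reflectVertex_fst, reflectVertex_mk, Bool.not_false, Bool.not_eq_true'] at hp ⊢
    obtain ⟨hab, ha, hb⟩ := hp
    refine ⟨fun h => hab ?_, by simp [hinv.apply_mk_snd ha], by simp [hinv.apply_mk_snd hb]⟩
    simpa [hinv.apply_mk_snd ha, hinv.apply_mk_snd hb] using congrArg (fun i => d (true, i)) h
  · rintro ⟨a, b⟩ hq
    simp only [mem_filter, mem_offDiag, mem_univ, true_and, reflectDiagram_apply,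
      reflectVertex_fst, reflectVertex_mk, Bool.not_false, Bool.not_eq_true'] at hq ⊢
    obtain ⟨hab, ha, hb⟩ := hq
    refine ⟨fun h => hab ?_, by simp [hinv.apply_mk_snd ha], by simp [hinv.apply_mk_snd hb]⟩
    simpa [hinv.apply_mk_snd ha, hinv.apply_mk_snd hb] using congrArg (fun i => d (false, i)) h
  · rintro ⟨a, b⟩ hp
    simp only [mem_filter, mem_offDiag, mem_univ, true_and] at hp
    simp [hinv.apply_mk_snd hp.2.1, hinv.apply_mk_snd hp.2.2]
  · rintro ⟨a, b⟩ hq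
    simp only [mem_filter, mem_offDiag, mem_univ, true_and, reflectDiagram_apply,
      reflectVertex_fst, reflectVertex_mk, Bool.not_false, Bool.not_eq_true'] at hq
    simp [hinv.apply_mk_snd hq.2.1, hinv.apply_mk_snd hq.2.2]
  · rintro ⟨a, b⟩ hp
    simp only [mem_filter, mem_offDiag, mem_univ, true_and] at hp
    exact zMulTerm_eq_reflectLinear_of_propagating hd (Prod.ext hp.2.1 rfl) (Prod.ext hp.2.2 rfl)

lemma sum_zMulTerm_arc (hd : IsWalledBrauerDiagram r s d) :
    ∑ p ∈ univ.offDiag with d (false, p.1) = (false, p.2), zMulTerm r s δ d p =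
      ((#{i | (d (false, i)).1 = false} : ℂ) * -δ) • Finsupp.single d 1 := by
  have hcard : #{p ∈ univ.offDiag | d (false, p.1) = (false, p.2)} =
      #{i | (d (false, i)).1 = false} := by
    refine card_nbij' Prod.fst (fun i => (i, (d (false, i)).2)) ?_ ?_ ?_ ?_
    · rintro ⟨a, b⟩ hp
      simp_all
    · intro i hi
      simp only [mem_coe, mem_filter, mem_univ, true_and, mem_offDiag] at hi ⊢
      refine ⟨fun h => hd.2.1 (false, i) ?_, Prod.ext hi rfl⟩
      exact Prod.ext hi h.symm
    · rintro ⟨a, b⟩ hp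
      simp_all
    · intro i _
      rfl
  rw [sum_congr rfl fun p hp => zMulTerm_of_arc hd (mem_filter.1 hp).2, sum_const, hcard,
    ← Nat.cast_smul_eq_nsmul ℂ, smul_smul]

lemma sum_zMulTerm_not_propagating_not_arc (hd : IsWalledBrauerDiagram r s d) :
    ∑ p ∈ univ.offDiag with ¬((d (false, p.1)).1 = true ∧ (d (false, p.2)).1 = true) ∧
      d (false, p.1) ≠ (false, p.2), zMulTerm r s δ d p = 0 := by
  have hinv : Function.Involutive d := hd.1
  have hfix : ∀ v, d v ≠ v := hd.2.1
  -- `(a, b)` is paired with `(a, c)` for the bottom arc `b — c`, or else with `(c, b)` for `a — c`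
  refine sum_involution (fun p _ => if (d (false, p.2)).1 = false then (p.1, (d (false, p.2)).2)
    else ((d (false, p.1)).2, p.2)) ?_ ?_ ?_ ?_
  all_goals
    rintro ⟨a, b⟩ hp
    simp only [mem_filter, mem_offDiag, mem_univ, true_and, not_and, Bool.not_eq_true] at hp ⊢
    obtain ⟨hab, hprop, harc⟩ := hp
    cases hb : (d (false, b)).1
  all_goals simp only [hb, ↓reduceIte, Bool.true_eq_false]
  · exact zMulTerm_add_zMulTerm_eq_zero hd hab harc (Prod.ext hb rfl)
  · have ha : (d (false, a)).1 = false := by simpa [hb] using mt hprop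
    rw [← zMulTerm_swap d a b, ← zMulTerm_swap d _ b]
    exact zMulTerm_add_zMulTerm_eq_zero hd hab.symm (fun h => harc (by rw [← h, hinv]))
      (Prod.ext ha rfl)
  · exact fun _ h => hfix (false, b) (Prod.ext hb (Prod.mk.inj h).2)
  · have ha : (d (false, a)).1 = false := by simpa [hb] using mt hprop
    exact fun _ h => hfix (false, a) (Prod.ext ha (Prod.mk.inj h).1)
  · have hc := hinv.apply_mk_snd hb
    refine ⟨fun h => harc (by rw [h, hc]), fun _ => by rw [hc], fun h => hab ?_⟩
    simpa [hinv _, hc] using congrArg d h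
  · have ha : (d (false, a)).1 = false := by simpa [hb] using mt hprop
    have hc := hinv.apply_mk_snd ha
    refine ⟨fun h => harc (by rw [← h]; exact Prod.ext ha rfl), fun h => by simp [hc] at h,
      fun h => hab (by simpa [hc] using h)⟩
  · simp [hinv.apply_mk_snd hb]
  · have ha : (d (false, a)).1 = false := by simpa [hb] using mt hprop
    simp [hinv.apply_mk_snd ha]

lemma sum_zMulTerm_not_propagating (hd : IsWalledBrauerDiagram r s d) :
    ∑ p ∈ univ.offDiag with ¬((d (false, p.1)).1 = true ∧ (d (false, p.2)).1 = true),
        zMulTerm r s δ d p =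
      ((#{i | (d (false, i)).1 = false} : ℂ) * -δ) • Finsupp.single d 1 := by
  rw [← sum_filter_add_sum_filter_not _ (fun p => d (false, p.1) = (false, p.2)), filter_filter,
    filter_filter, sum_zMulTerm_not_propagating_not_arc hd, add_zero,
    filter_congr fun p _ => and_iff_right_of_imp fun h => by simp [h], sum_zMulTerm_arc hd]

lemma card_top_arc_ends_eq_card_bottom {n : ℕ} {d : Diagram n} (hinv : Function.Involutive d) :
    #{i | (d (true, i)).1 = true} = #{i | (d (false, i)).1 = false} := by
  have hprop : #{i | (d (false, i)).1 = true} = #{j | (d (true, j)).1 = false} := by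
    refine card_nbij' (fun i => (d (false, i)).2) (fun j => (d (true, j)).2) ?_ ?_ ?_ ?_ <;>
      intro i hi <;> simp only [mem_coe, mem_filter, mem_univ, true_and] at hi ⊢ <;>
      simp [hinv.apply_mk_snd hi]
  have hbot := card_filter_add_card_filter_not (s := univ)
    fun i : Fin n => (d (false, i)).1 = true
  have htop := card_filter_add_card_filter_not (s := univ)
    fun i : Fin n => (d (true, i)).1 = false
  simp only [Bool.not_eq_true, Bool.not_eq_false] at hbot htop
  omega

lemma sum_zMulTerm_offDiag (hd : IsWalledBrauerDiagram r s d) :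
    ∑ p ∈ univ.offDiag, zMulTerm r s δ d p =
      reflectLinear (r + s) (∑ p ∈ univ.offDiag, zMulTerm r s δ (reflectDiagram d) p) := by
  rw [← sum_filter_add_sum_filter_not univ.offDiag
      (fun p => (d (false, p.1)).1 = true ∧ (d (false, p.2)).1 = true),
    ← sum_filter_add_sum_filter_not univ.offDiag
      (fun p =>
        (reflectDiagram d (false, p.1)).1 = true ∧ (reflectDiagram d (false, p.2)).1 = true),
    map_add, sum_zMulTerm_propagating hd, sum_zMulTerm_not_propagating hd,
    sum_zMulTerm_not_propagating hd.reflectDiagram, map_smul, reflectLinear_single,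
    reflectDiagram_reflectDiagram]
  simp [card_top_arc_ends_eq_card_bottom hd.1]

end Sums

section Centrality

variable {r s : ℕ} (δ : ℂ)

lemma zElt_mul_single (d : Diagram (r + s)) :
    wbMul (r + s) δ (zElt r s) (Finsupp.single d 1) =
      ∑ p ∈ Finset.univ with p.1 < p.2, zMulTerm r s δ d p := by
  rw [wbMul_eq_wbMulBilin, zElt, map_sum, LinearMap.sum_apply, Finset.sum_filter]
  refine Finset.sum_congr rfl fun p _ => ?_
  by_cases hp : p.1 < p.2
  · rw [if_pos hp, if_pos hp, map_smul, LinearMap.smul_apply, wbMulBilin_single_single, one_mul,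
      one_smul, zMulTerm]
  · rw [if_neg hp, if_neg hp, map_zero, LinearMap.zero_apply]

lemma single_mul_zElt (d : Diagram (r + s)) :
    wbMul (r + s) δ (Finsupp.single d 1) (zElt r s) =
      reflectLinear (r + s)
        (∑ p ∈ Finset.univ with p.1 < p.2, zMulTerm r s δ (reflectDiagram d) p) := by
  rw [wbMul_eq_wbMulBilin, zElt, map_sum, map_sum, Finset.sum_filter]
  refine Finset.sum_congr rfl fun p _ => ?_
  by_cases hp : p.1 < p.2
  · rw [if_pos hp, if_pos hp, map_smul, wbMulBilin_single_single, one_mul, one_smul, zMulTerm,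
      map_smul, ← diagramProduct_reflectDiagram, reflectDiagram_reflectDiagram,
      reflectDiagram_flipMap, Equiv.swap_inv]
  · rw [if_neg hp, if_neg hp, map_zero]

lemma zElt_mul_single_comm {d : Diagram (r + s)} (hd : IsWalledBrauerDiagram r s d) :
    wbMul (r + s) δ (zElt r s) (Finsupp.single d 1) =
      wbMul (r + s) δ (Finsupp.single d 1) (zElt r s) := by
  have h := sum_zMulTerm_offDiag (δ := δ) hd
  rw [Finset.sum_offDiag_eq_two_nsmul _ (zMulTerm_swap d),
    Finset.sum_offDiag_eq_two_nsmul _ (zMulTerm_swap _), ← Nat.cast_smul_eq_nsmul ℂ,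
    ← Nat.cast_smul_eq_nsmul ℂ, map_smul] at h
  rw [zElt_mul_single, single_mul_zElt]
  exact smul_right_injective _ (by norm_num) h

end Centrality

/-- `z_{r,s}` is central in `B_{r,s}(δ)` (the span of the walled
Brauer diagrams, with multiplication `wbMul`). -/
theorem zElt_central (r s : ℕ) (δ : ℂ)
    (y : (WBVertex (r + s) → WBVertex (r + s)) →₀ ℂ)
    (hy : y ∈ Submodule.span ℂ {x : (WBVertex (r + s) → WBVertex (r + s)) →₀ ℂ |
      ∃ d, IsWalledBrauerDiagram r s d ∧ x = Finsupp.single d (1 : ℂ)}) :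
    wbMul (r + s) δ (zElt r s) y = wbMul (r + s) δ y (zElt r s) := by
  have hbasis : Set.EqOn (wbMulBilin δ (zElt r s)) ((wbMulBilin δ).flip (zElt r s))
      {x | ∃ d, IsWalledBrauerDiagram r s d ∧ x = Finsupp.single d 1} := by
    rintro _ ⟨d, hd, rfl⟩
    simpa [wbMul_eq_wbMulBilin] using zElt_mul_single_comm δ hd
  simpa [wbMul_eq_wbMulBilin] using LinearMap.eqOn_span' hbasis hy
end

section
/- Every partition of N is an (m,n)-hook partition if and only if N < (m+1)(n+1). -/
/-- A hook-shaped Young diagram: an `(m+1) × (n+1)` rectangle with `r` extra cells in row 0. -/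
def hookEx (m n r : ℕ) : YoungDiagram where
  cells := Finset.range (m+1) ×ˢ Finset.range (n+1) ∪ {0} ×ˢ Finset.Ico (n+1) (n+1+r)
  isLowerSet := by
    rintro ⟨i2, j2⟩ ⟨i1, j1⟩ ⟨hi : i1 ≤ i2, hj : j1 ≤ j2⟩ h
    simp only [Finset.coe_union, Set.mem_union, Finset.coe_product, Set.mem_prod,
      Finset.mem_coe, Finset.mem_range, Finset.mem_singleton, Finset.mem_Ico,
      Finset.coe_singleton, Set.mem_singleton_iff] at h ⊢
    omega

lemma hookEx_card (m n r : ℕ) : (hookEx m n r).card = (m+1) * (n+1) + r := by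
  have hd : Disjoint (Finset.range (m+1) ×ˢ Finset.range (n+1))
      (({0} : Finset ℕ) ×ˢ Finset.Ico (n+1) (n+1+r)) := by
    rw [Finset.disjoint_left]
    rintro ⟨i, j⟩ h1 h2
    simp only [Finset.mem_product, Finset.mem_range, Finset.mem_singleton, Finset.mem_Ico] at h1 h2
    omega
  show (Finset.range (m+1) ×ˢ Finset.range (n+1) ∪ _).card = _
  rw [Finset.card_union_of_disjoint hd]
  simp [Nat.mul_comm]

lemma hookEx_mem (m n r : ℕ) : (m, n) ∈ (hookEx m n r).cells := by
  simp [hookEx]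

/-- every partition of `N` is an `(m,n)`-hook partition (its Young
diagram does not contain the box in row `m+1` and column `n+1`, which in the
`0`-indexed conventions of `YoungDiagram` is the cell `(m, n)`) if and only if
`N < (m + 1) * (n + 1)`. -/
theorem forall_hook_partition_iff (N m n : ℕ) :
    (∀ μ : YoungDiagram, μ.card = N → (m, n) ∉ μ.cells) ↔ N < (m + 1) * (n + 1) := by
  constructor
  · intro h
    by_contra hN
    push_neg at hN
    obtain ⟨r, hr⟩ := Nat.exists_eq_add_of_le hN
    exact h (hookEx m n r) (by rw [hookEx_card]; omega) (hookEx_mem m n r)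
  · intro hN μ hcard hmem
    have hsub : Finset.range (m+1) ×ˢ Finset.range (n+1) ⊆ μ.cells := by
      rintro ⟨i, j⟩ hij
      simp only [Finset.mem_product, Finset.mem_range] at hij
      exact μ.isLowerSet (Prod.mk_le_mk.mpr ⟨Nat.lt_succ_iff.mp hij.1,
        Nat.lt_succ_iff.mp hij.2⟩) hmem
    have := Finset.card_le_card hsub
    simp only [Finset.card_product, Finset.card_range] at this
    rw [show μ.card = μ.cells.card from rfl] at hcard
    omega
end
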